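/- arXiv:1812.07643 — 3 statements merged into one kernel-verified Lean document; each statement's English description precedes it below -/
import Mathlib

section
/- On the special linear group SL(n,ℝ) with the left-invariant form ⟨U,V⟩_A = Tr((A⁻¹U)ᵀ I_{p,q} A⁻¹V), the semi-normal space at A equals {λ A I_{p,q} : λ ∈ ℝ}, and the induced semi-Riemannian structure on SL(n,ℝ) is non-degenerate if and only if p ≠ q. Equivalently, at the identity: the set of X ∈ ℝ^{n×n} with Tr(Xᵀ I_{p,q} V) = 0 for all traceless V equals {λ I_{p,q}}, and λI_{p,q} is traceless iff p = q. -/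
/-!
The traceless matrices are spanned by the elementary matrices `E_ij` (`i ≠ j`) and
`E_ii - E_jj`; testing `Tr(M V) = 0` against them shows that `M` is scalar. Applied to
`M = Xᵀ J` with `J = I_{p,q}` a symmetric involution, this gives `X = λ J`, and
`Tr(λ J) = λ (q - p)`.
-/

open Matrix

namespace Matrix

section TraceForm

variable {n R : Type*} [Fintype n] [DecidableEq n] [CommRing R]

theorem exists_eq_smul_one_of_forall_trace_mul_eq_zero {M : Matrix n n R}
    (h : ∀ V : Matrix n n R, V.trace = 0 → (M * V).trace = 0) : ∃ c : R, M = c • 1 := by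
  cases isEmpty_or_nonempty n with
  | inl _ => exact ⟨0, Subsingleton.elim _ _⟩
  | inr hn =>
    obtain ⟨i₀⟩ := hn
    have trace_mul_single_one (i j : n) : (M * single i j 1).trace = M j i := by
      simp [trace_mul_single]
    have off_diag (i j : n) (hij : i ≠ j) : M j i = 0 := by
      rw [← trace_mul_single_one]
      exact h _ (trace_single_eq_of_ne _ _ _ hij)
    have diag (i : n) : M i i = M i₀ i₀ := by
      have := h (single i i 1 - single i₀ i₀ 1) (by simp)
      rwa [Matrix.mul_sub, trace_sub, trace_mul_single_one, trace_mul_single_one,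
        sub_eq_zero] at this
    refine ⟨M i₀ i₀, ext fun i j => ?_⟩
    by_cases hij : i = j
    · subst hij
      simp [diag]
    · simp [hij, off_diag j i (Ne.symm hij)]

theorem forall_trace_mul_eq_zero_iff {M : Matrix n n R} :
    (∀ V : Matrix n n R, V.trace = 0 → (M * V).trace = 0) ↔ ∃ c : R, M = c • 1 :=
  ⟨exists_eq_smul_one_of_forall_trace_mul_eq_zero, by rintro ⟨c, rfl⟩ V hV; simp [hV]⟩

theorem setOf_forall_trace_transpose_mul_mul_eq_zero {J : Matrix n n R}
    (hJT : Jᵀ = J) (hJJ : J * J = 1) :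
    {X : Matrix n n R | ∀ V, V.trace = 0 → (Xᵀ * J * V).trace = 0} =
      {X | ∃ c : R, X = c • J} := by
  ext X
  simp only [Set.mem_ofPred_eq, forall_trace_mul_eq_zero_iff]
  constructor
  · rintro ⟨c, hc⟩
    have hXT : Xᵀ = c • J := by
      rw [← Matrix.mul_one Xᵀ, ← hJJ, ← Matrix.mul_assoc, hc, smul_mul, Matrix.one_mul]
    exact ⟨c, by rw [← transpose_transpose X, hXT, transpose_smul, hJT]⟩
  · rintro ⟨c, rfl⟩
    exact ⟨c, by rw [transpose_smul, hJT, smul_mul, hJJ]⟩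

end TraceForm

section Blocks

variable {l m R : Type*}

theorem trace_fromBlocks [Fintype l] [Fintype m] [AddCommMonoid R] (A : Matrix l l R)
    (B : Matrix l m R) (C : Matrix m l R) (D : Matrix m m R) :
    (fromBlocks A B C D).trace = A.trace + D.trace := by
  simp [trace, Fintype.sum_sum_type]

variable [DecidableEq l] [DecidableEq m] [Ring R]

theorem transpose_fromBlocks_neg_one_one :
    (fromBlocks (-1 : Matrix l l R) 0 0 (1 : Matrix m m R))ᵀ = fromBlocks (-1) 0 0 1 := by
  simp [fromBlocks_transpose]

variable [Fintype l] [Fintype m]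

theorem fromBlocks_neg_one_one_mul_self :
    fromBlocks (-1 : Matrix l l R) 0 0 (1 : Matrix m m R) * fromBlocks (-1) 0 0 1 = 1 := by
  simp [fromBlocks_multiply, ← fromBlocks_one]

theorem trace_fromBlocks_neg_one_one :
    (fromBlocks (-1 : Matrix l l R) 0 0 (1 : Matrix m m R)).trace =
      Fintype.card m - Fintype.card l := by
  rw [trace_fromBlocks, trace_neg, trace_one, trace_one, neg_add_eq_sub]

end Blocks

end Matrix

/-- at the identity of `SL(n,ℝ)` with the form
`⟨U,V⟩ = Tr(Uᵀ I_{p,q} V)`, the semi-normal space — the set of `X` with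
`Tr(Xᵀ I_{p,q} V) = 0` for all traceless `V` — equals `{λ I_{p,q} : λ ∈ ℝ}`, and
a nonzero multiple `λ I_{p,q}` is traceless (i.e. lies in the tangent space, so the
structure is degenerate) iff `p = q`. -/
theorem stmt_15 (p q : ℕ) :
    let J : Matrix (Fin p ⊕ Fin q) (Fin p ⊕ Fin q) ℝ := Matrix.fromBlocks (-1) 0 0 1
    ({X : Matrix (Fin p ⊕ Fin q) (Fin p ⊕ Fin q) ℝ |
        ∀ V : Matrix (Fin p ⊕ Fin q) (Fin p ⊕ Fin q) ℝ,
          V.trace = 0 → (Xᵀ * J * V).trace = 0}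
      = {X | ∃ c : ℝ, X = c • J}) ∧
    (∀ c : ℝ, c ≠ 0 → ((c • J).trace = 0 ↔ p = q)) := by
  intro J
  refine ⟨setOf_forall_trace_transpose_mul_mul_eq_zero transpose_fromBlocks_neg_one_one
    fromBlocks_neg_one_one_mul_self, fun c hc => ?_⟩
  rw [trace_smul, trace_fromBlocks_neg_one_one, smul_eq_mul, mul_eq_zero, or_iff_right hc,
    Fintype.card_fin, Fintype.card_fin, sub_eq_zero, Nat.cast_inj, eq_comm]
end

section
/- Let Δ be an n×n skew-symmetric matrix in block form [[Δ₁, −Δ₂ᵀ],[Δ₂, Δ₃]] with Δ₁ ∈ ℝ^{p×p}, Δ₃ ∈ ℝ^{q×q} skew-symmetric, Δ₂ ∈ ℝ^{q×p}, n = p+q, and suppose Δ₂Δ₁ + Δ₃Δ₂ = 0. Then the skew-symmetric part of I_{p,q}(Δ² ) vanishes, i.e., I_{p,q}Δ² is a symmetric matrix. -/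
/-!
`Δ` is skew-symmetric, so `Δ²` is symmetric, and the condition `Δ₂Δ₁ + Δ₃Δ₂ = 0`
(together with its transpose) kills both off-diagonal blocks of `Δ²`. A block-diagonal matrix
commutes with `I_{p,q}`, and the product of two commuting symmetric matrices is symmetric.
-/

open Matrix

namespace Matrix

variable {m n R : Type*}

theorem IsSymm.mul_of_commute [Fintype n] [CommSemiring R] {A B : Matrix n n R} (hA : A.IsSymm)
    (hB : B.IsSymm) (hAB : Commute A B) : (A * B).IsSymm := by
  rw [IsSymm, transpose_mul, hA.eq, hB.eq, hAB.eq]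

theorem commute_fromBlocks_zero_zero [Fintype m] [Fintype n] [Semiring R]
    {A A' : Matrix m m R} {D D' : Matrix n n R} (hA : Commute A A') (hD : Commute D D') :
    Commute (fromBlocks A 0 0 D) (fromBlocks A' 0 0 D') := by
  simp [Commute, SemiconjBy, fromBlocks_multiply, hA.eq, hD.eq]

theorem isSymm_mul_self_of_transpose_eq_neg [Fintype n] [CommRing R] {M : Matrix n n R}
    (hM : Mᵀ = -M) : (M * M).IsSymm := by
  rw [IsSymm, transpose_mul, hM, neg_mul_neg]

theorem transpose_fromBlocks_neg_transpose [InvolutiveNeg R] {A : Matrix m m R}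
    {D : Matrix n n R} {C : Matrix n m R} (hA : Aᵀ = -A) (hD : Dᵀ = -D) :
    (fromBlocks A (-Cᵀ) C D)ᵀ = -fromBlocks A (-Cᵀ) C D := by
  rw [fromBlocks_transpose, fromBlocks_neg, hA, hD, transpose_neg, transpose_transpose, neg_neg]

theorem fromBlocks_neg_transpose_mul_self [Fintype m] [Fintype n] [CommRing R]
    {A : Matrix m m R} {D : Matrix n n R} {C : Matrix n m R} (hA : Aᵀ = -A) (hD : Dᵀ = -D)
    (hC : C * A + D * C = 0) :
    fromBlocks A (-Cᵀ) C D * fromBlocks A (-Cᵀ) C D =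
      fromBlocks (A * A - Cᵀ * C) 0 0 (D * D - C * Cᵀ) := by
  -- the upper-right block is `-(C * A + D * C)ᵀ` by skew-symmetry of `A` and `D`
  have hCt : A * Cᵀ + Cᵀ * D = 0 := by
    simpa [transpose_mul, hA, hD, add_comm] using congrArg (-transpose ·) hC
  rw [fromBlocks_multiply, hC]
  congr 1
  · rw [Matrix.neg_mul, ← sub_eq_add_neg]
  · rw [Matrix.mul_neg, Matrix.neg_mul, ← neg_add, hCt, neg_zero]
  · rw [Matrix.mul_neg, neg_add_eq_sub]

end Matrix

/-- for a skew-symmetric `Δ = [[Δ₁, -Δ₂ᵀ],[Δ₂, Δ₃]]` (with `Δ₁`, `Δ₃`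
skew-symmetric) satisfying `Δ₂Δ₁ + Δ₃Δ₂ = 0`, the matrix `I_{p,q}Δ²` is symmetric,
i.e. its skew-symmetric part vanishes. -/
theorem stmt_16 (p q : ℕ)
    (Δ₁ : Matrix (Fin p) (Fin p) ℝ) (Δ₃ : Matrix (Fin q) (Fin q) ℝ)
    (Δ₂ : Matrix (Fin q) (Fin p) ℝ)
    (h1 : Δ₁ᵀ = -Δ₁) (h3 : Δ₃ᵀ = -Δ₃)
    (hcomm : Δ₂ * Δ₁ + Δ₃ * Δ₂ = 0) :
    let J : Matrix (Fin p ⊕ Fin q) (Fin p ⊕ Fin q) ℝ := Matrix.fromBlocks (-1) 0 0 1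
    let Δ : Matrix (Fin p ⊕ Fin q) (Fin p ⊕ Fin q) ℝ :=
      Matrix.fromBlocks Δ₁ (-Δ₂ᵀ) Δ₂ Δ₃
    (J * (Δ * Δ))ᵀ = J * (Δ * Δ) := by
  intro J Δ
  have hJ : J.IsSymm := (isSymm_one.neg).fromBlocks (by simp) isSymm_one
  have hΔΔ : (Δ * Δ).IsSymm :=
    isSymm_mul_self_of_transpose_eq_neg (transpose_fromBlocks_neg_transpose h1 h3)
  have hcommute : Commute J (Δ * Δ) := by
    rw [show Δ * Δ = _ from fromBlocks_neg_transpose_mul_self h1 h3 hcomm]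
    exact commute_fromBlocks_zero_zero (Commute.one_left _).neg_left (Commute.one_left _)
  exact hJ.mul_of_commute hΔΔ hcommute
end

section
/- Let x ∈ S^{p,q}, X ∈ T_xS^{p,q} with ⟨X,X⟩ = 0 (null), and Δ ∈ T_xS^{p,q}. Then the vector field Δ(t) = −⟨Δ,X⟩(t x + (t²/2)X) + Δ along the geodesic γ(t) = x + tX satisfies: Δ(0) = Δ, Δ(t) ∈ T_{γ(t)}S^{p,q} for all t (i.e., ⟨Δ(t), γ(t)⟩ = 0), and Δ'(t) = −⟨Δ,X⟩γ(t) lies in the semi-normal space span(γ(t)); moreover ⟨Δ(t),Δ(t)⟩ = ⟨Δ,Δ⟩ for all t. -/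
/-! Expand `⟨Δ(t), γ(t)⟩` and `⟨Δ(t), Δ(t)⟩` bilinearly, using `⟨x,x⟩ = 1` and
`⟨x,X⟩ = ⟨X,X⟩ = ⟨x,Δ⟩ = 0`: the first collapses to `−c t + t c`, and in the second the cross
term `−c t²⟨X,Δ⟩ = −c²t²` cancels `c²t²⟨x,x⟩`. The derivative is read off termwise. -/

open Matrix

/-- The matrix `I_{p,q} = diag(-1,…,-1,1,…,1)` with `p` minus-ones and `q` ones. -/
def Ipq (p q : ℕ) : Matrix (Fin (p + q)) (Fin (p + q)) ℝ :=
  Matrix.diagonal fun i => if (i : ℕ) < p then (-1 : ℝ) else 1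

namespace Matrix.IsSymm

theorem dotProduct_mulVec_comm {n R : Type*} [Fintype n] [CommSemiring R]
    {A : Matrix n n R} (hA : A.IsSymm) (u v : n → R) :
    u ⬝ᵥ (A *ᵥ v) = v ⬝ᵥ (A *ᵥ u) := by
  rw [dotProduct_mulVec, ← mulVec_transpose, hA.eq, dotProduct_comm]

variable {n K : Type*} [Fintype n] [Field K] {A : Matrix n n K} (hA : A.IsSymm) {x X Δ : n → K}
  (hx : x ⬝ᵥ (A *ᵥ x) = 1) (hXt : x ⬝ᵥ (A *ᵥ X) = 0)
  (hXnull : X ⬝ᵥ (A *ᵥ X) = 0) (hΔt : x ⬝ᵥ (A *ᵥ Δ) = 0)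
include hA hx hXt hXnull hΔt

theorem nullTransport_dotProduct_geodesic (t : K) :
    let c := Δ ⬝ᵥ (A *ᵥ X)
    ((-c) • (t • x + (t ^ 2 / 2) • X) + Δ) ⬝ᵥ (A *ᵥ (x + t • X)) = 0 := by
  have hXx := (hA.dotProduct_mulVec_comm X x).trans hXt
  have hΔx := (hA.dotProduct_mulVec_comm Δ x).trans hΔt
  simp only [mulVec_add, mulVec_smul, dotProduct_add, add_dotProduct, smul_dotProduct,
    dotProduct_smul, smul_eq_mul, hx, hXt, hXnull, hXx, hΔx]
  ring

theorem nullTransport_dotProduct_self [CharZero K] (t : K) :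
    let c := Δ ⬝ᵥ (A *ᵥ X)
    let D := (-c) • (t • x + (t ^ 2 / 2) • X) + Δ
    D ⬝ᵥ (A *ᵥ D) = Δ ⬝ᵥ (A *ᵥ Δ) := by
  have hXx := (hA.dotProduct_mulVec_comm X x).trans hXt
  have hΔx := (hA.dotProduct_mulVec_comm Δ x).trans hΔt
  have hXΔ := hA.dotProduct_mulVec_comm X Δ
  simp only [mulVec_add, mulVec_smul, dotProduct_add, add_dotProduct, smul_dotProduct,
    dotProduct_smul, smul_eq_mul, hx, hXt, hXnull, hΔt, hXx, hΔx, hXΔ]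
  ring

end Matrix.IsSymm

theorem hasDerivAt_smul_add_sq_half_smul {𝕜 F : Type*} [NontriviallyNormedField 𝕜]
    [CharZero 𝕜] [NormedAddCommGroup F] [NormedSpace 𝕜 F] (a : 𝕜) (x X Δ : F) (t : 𝕜) :
    HasDerivAt (fun t : 𝕜 => a • (t • x + (t ^ 2 / 2) • X) + Δ) (a • (x + t • X)) t := by
  have hsq : HasDerivAt (fun t : 𝕜 => t ^ 2 / 2) t t :=
    ((hasDerivAt_pow 2 t).div_const 2).congr_deriv (by push_cast; ring)
  have hcurve : HasDerivAt (fun t : 𝕜 => t • x + (t ^ 2 / 2) • X) (x + t • X) t := by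
    simpa using ((hasDerivAt_id' t).smul_const x).fun_add (hsq.smul_const X)
  exact (hcurve.const_smul a).add_const Δ

theorem Ipq_isSymm (p q : ℕ) : (Ipq p q).IsSymm :=
  isSymm_diagonal _

/-- parallel transport along a null geodesic `γ(t) = x + tX` on `S^{p,q}`:
`Δ(t) = -⟨Δ,X⟩(t x + (t²/2)X) + Δ` satisfies `Δ(0) = Δ`, is tangent along `γ`,
`Δ'(t) = -⟨Δ,X⟩γ(t) ∈ span(γ(t))`, and preserves the scalar square `⟨Δ(t),Δ(t)⟩`. -/
theorem stmt_17 (p q : ℕ) (x X Δ : Fin (p + q) → ℝ)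
    (hx : x ⬝ᵥ (Ipq p q *ᵥ x) = 1) (hXt : x ⬝ᵥ (Ipq p q *ᵥ X) = 0)
    (hXnull : X ⬝ᵥ (Ipq p q *ᵥ X) = 0) (hΔt : x ⬝ᵥ (Ipq p q *ᵥ Δ) = 0) :
    let γ : ℝ → (Fin (p + q) → ℝ) := fun t => x + t • X
    let c : ℝ := Δ ⬝ᵥ (Ipq p q *ᵥ X)
    let D : ℝ → (Fin (p + q) → ℝ) := fun t => (-c) • (t • x + (t ^ 2 / 2) • X) + Δ
    D 0 = Δ ∧
      (∀ t : ℝ, D t ⬝ᵥ (Ipq p q *ᵥ γ t) = 0) ∧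
      (∀ t : ℝ, deriv D t = (-c) • γ t) ∧
      (∀ t : ℝ, D t ⬝ᵥ (Ipq p q *ᵥ D t) = Δ ⬝ᵥ (Ipq p q *ᵥ Δ)) := by
  intro γ c D
  have hA := Ipq_isSymm p q
  exact ⟨by simp [D],
    hA.nullTransport_dotProduct_geodesic hx hXt hXnull hΔt,
    fun t => (hasDerivAt_smul_add_sq_half_smul (-c) x X Δ t).deriv,
    hA.nullTransport_dotProduct_self hx hXt hXnull hΔt⟩
end
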